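/- Let φ : ℝ³ → ℝ be continuously differentiable, let c₀ > 0, ε > 0, and let x₀ ∈ ℝ³ be such that |φ(x₀)| ≤ ε and ‖∇φ(y)‖ ≥ c₀ for all y in the closed ball of radius 2ε/c₀ centered at x₀. Then there exists z ∈ ℝ³ with ‖z − x₀‖ ≤ 2ε/c₀ and φ(z) = 0; in particular, the distance from x₀ to the zero level set φ⁻¹({0}) is at most 2ε/c₀. -/

import Mathlib

set_option maxHeartbeats 800000

open InnerProductSpace Metric Set

local notation "E" => EuclideanSpace ℝ (Fin 3)

/-- Inner-product formula for the gradient. -/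
lemma fderiv_eq_inner_gradient (φ : E → ℝ) (p v : E) :
    fderiv ℝ φ p v = ⟪gradient φ p, v⟫_ℝ := by
  rw [gradient, toDual_symm_apply]

/-- Quantitative descent: if the gradient has norm at least `c₀` on a closed ball of
radius `r`, then `φ` decreases by at least `c₀/2 * r` somewhere in the ball. -/
lemma descent (φ : E → ℝ) (hφ : ContDiff ℝ 1 φ)
    (c₀ r : ℝ) (hc₀ : 0 < c₀) (hr : 0 < r) (x₀ : E)
    (hgrad : ∀ y ∈ Metric.closedBall x₀ r, c₀ ≤ ‖gradient φ y‖) :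
    ∃ x : E, ‖x - x₀‖ ≤ r ∧ φ x ≤ φ x₀ - c₀ / 2 * r := by
  have hdiff : Differentiable ℝ φ := hφ.differentiable one_ne_zero
  have hgc : Continuous (gradient φ) :=
    (InnerProductSpace.toDual ℝ E).symm.continuous.comp (hφ.continuous_fderiv one_ne_zero)
  have ucont : UniformContinuousOn (gradient φ) (Metric.closedBall x₀ r) :=
    (isCompact_closedBall x₀ r).uniformContinuousOn_of_continuous hgc.continuousOn
  rw [Metric.uniformContinuousOn_iff_le] at ucont
  obtain ⟨δ, hδpos, hδ⟩ := ucont (c₀ / 2) (by positivity)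
  obtain ⟨N, hN⟩ := exists_nat_gt (r / δ)
  have hNpos : 0 < (N : ℝ) := lt_trans (by positivity) hN
  set h : ℝ := r / N with hh
  have hhpos : 0 < h := by positivity
  have hhδ : h ≤ δ := by
    rw [hh, div_le_iff₀ hNpos]
    calc r = (r / δ) * δ := by field_simp
    _ ≤ N * δ := by nlinarith
    _ = δ * N := by ring
  have hNh : (N : ℝ) * h = r := by
    rw [hh]; field_simp
  -- main induction
  have key : ∀ k : ℕ, k ≤ N →
      ∃ x : E, ‖x - x₀‖ ≤ k * h ∧ φ x ≤ φ x₀ - c₀ / 2 * (k * h) := by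
    intro k
    induction k with
    | zero => intro _; exact ⟨x₀, by simp⟩
    | succ k ih =>
      intro hk1
      obtain ⟨x, hx, hφx⟩ := ih (le_of_lt (Nat.lt_of_succ_le hk1))
      have hkh : (k : ℝ) * h + h ≤ r := by
        have : ((k : ℝ) + 1) ≤ N := by exact_mod_cast hk1
        calc (k : ℝ) * h + h = ((k : ℝ) + 1) * h := by ring
        _ ≤ N * h := by nlinarith
        _ = r := hNh
      have hxball : x ∈ Metric.closedBall x₀ r := by
        rw [Metric.mem_closedBall, dist_eq_norm]
        nlinarith
      set g : E := gradient φ x with hg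
      have hgnorm : c₀ ≤ ‖g‖ := hgrad x hxball
      have hgpos : 0 < ‖g‖ := lt_of_lt_of_le hc₀ hgnorm
      set v : E := -(‖g‖⁻¹ • g) with hv
      have hvnorm : ‖v‖ = 1 := by
        rw [hv, norm_neg, norm_smul, norm_inv, norm_norm, inv_mul_cancel₀ (ne_of_gt hgpos)]
      set ψ : ℝ → ℝ := fun s => φ (x + s • v) + c₀ / 2 * s with hψ
      have hline : ∀ s : ℝ, HasDerivAt (fun s : ℝ => x + s • v) v s := by
        intro s
        simpa using ((hasDerivAt_id s).smul_const v).const_add x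
      have hder : ∀ s : ℝ, HasDerivAt ψ (fderiv ℝ φ (x + s • v) v + c₀ / 2) s := by
        intro s
        have := ((hdiff (x + s • v)).hasFDerivAt.comp_hasDerivAt s (hline s)).add
          ((hasDerivAt_id s).const_mul (c₀ / 2))
        simp only [mul_one] at this; exact this
      have hbound : ∀ s ∈ Set.Icc (0 : ℝ) h, fderiv ℝ φ (x + s • v) v + c₀ / 2 ≤ 0 := by
        intro s hs
        set p : E := x + s • v with hp
        have hpx : ‖p - x‖ = s := by
          rw [hp]
          simp [norm_smul, hvnorm, abs_of_nonneg hs.1]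
        have hpball : p ∈ Metric.closedBall x₀ r := by
          rw [Metric.mem_closedBall, dist_eq_norm]
          calc ‖p - x₀‖ = ‖(p - x) + (x - x₀)‖ := by rw [sub_add_sub_cancel]
          _ ≤ ‖p - x‖ + ‖x - x₀‖ := norm_add_le _ _
          _ ≤ s + (k : ℝ) * h := by rw [hpx]; linarith [hx]
          _ ≤ r := by nlinarith [hs.2]
        have hclose : ‖gradient φ p - g‖ ≤ c₀ / 2 := by
          have := hδ p hpball x hxball (by rw [dist_eq_norm, hpx]; linarith [hs.2])
          rwa [dist_eq_norm] at this
        have hinner : ⟪gradient φ p, g⟫_ℝ ≥ ‖g‖ ^ 2 - c₀ / 2 * ‖g‖ := by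
          have h1 : ⟪gradient φ p, g⟫_ℝ = ⟪g, g⟫_ℝ + ⟪gradient φ p - g, g⟫_ℝ := by
            rw [← inner_add_left, add_sub_cancel]
          have h2 : |⟪gradient φ p - g, g⟫_ℝ| ≤ c₀ / 2 * ‖g‖ := by
            calc |⟪gradient φ p - g, g⟫_ℝ| ≤ ‖gradient φ p - g‖ * ‖g‖ :=
              abs_real_inner_le_norm _ _
            _ ≤ c₀ / 2 * ‖g‖ := by nlinarith [norm_nonneg (gradient φ p - g)]
          have h3 : ⟪g, g⟫_ℝ = ‖g‖ ^ 2 := real_inner_self_eq_norm_sq g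
          have := neg_abs_le ⟪gradient φ p - g, g⟫_ℝ
          linarith
        have hfd : fderiv ℝ φ p v = -(‖g‖⁻¹ * ⟪gradient φ p, g⟫_ℝ) := by
          rw [fderiv_eq_inner_gradient, hv, inner_neg_right, real_inner_smul_right]
        rw [hfd]
        have hinv : ‖g‖⁻¹ * ⟪gradient φ p, g⟫_ℝ ≥ ‖g‖ - c₀ / 2 := by
          have h4 : ‖g‖⁻¹ * (‖g‖ ^ 2 - c₀ / 2 * ‖g‖) = ‖g‖ - c₀ / 2 := by
            field_simp
          have h5 : ‖g‖⁻¹ * (‖g‖ ^ 2 - c₀ / 2 * ‖g‖) ≤ ‖g‖⁻¹ * ⟪gradient φ p, g⟫_ℝ :=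
            mul_le_mul_of_nonneg_left hinner (by positivity)
          linarith
        linarith
      have hanti : AntitoneOn ψ (Set.Icc (0 : ℝ) h) := by
        apply antitoneOn_of_deriv_nonpos (convex_Icc 0 h)
        · exact fun s _ => (hder s).continuousAt.continuousWithinAt
        · exact fun s _ => ((hder s).differentiableAt).differentiableWithinAt
        · intro s hs
          rw [(hder s).deriv]
          exact hbound s (interior_subset hs)
      have hstep : φ (x + h • v) ≤ φ x - c₀ / 2 * h := by
        have := hanti (Set.left_mem_Icc.mpr (le_of_lt hhpos))
          (Set.right_mem_Icc.mpr (le_of_lt hhpos)) (le_of_lt hhpos)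
        simp only [hψ, zero_smul, add_zero, mul_zero] at this
        linarith
      refine ⟨x + h • v, ?_, ?_⟩
      · calc ‖x + h • v - x₀‖ = ‖(x - x₀) + h • v‖ := by congr 1; abel
        _ ≤ ‖x - x₀‖ + ‖h • v‖ := norm_add_le _ _
        _ ≤ (k : ℝ) * h + h := by
            rw [norm_smul, hvnorm, mul_one, Real.norm_eq_abs, abs_of_pos hhpos]; linarith
        _ = ((k : ℕ) + 1 : ℕ) * h := by push_cast; ring
      · have : ((k : ℕ) + 1 : ℕ) * h = (k : ℝ) * h + h := by push_cast; ring
        rw [this]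
        linarith
  obtain ⟨x, hx1, hx2⟩ := key N le_rfl
  rw [hNh] at hx1 hx2
  exact ⟨x, hx1, hx2⟩

/-- Zero of `φ` on a segment by the intermediate value theorem. -/
lemma seg_zero (φ : E → ℝ) (hφc : Continuous φ) (x₀ x₁ : E) (r : ℝ) (hr : 0 ≤ r)
    (h1 : ‖x₁ - x₀‖ ≤ r) (h0 : (0 : ℝ) ∈ Set.uIcc (φ x₀) (φ x₁)) :
    ∃ z : E, ‖z - x₀‖ ≤ r ∧ φ z = 0 := by
  set g : ℝ → ℝ := fun t => φ (x₀ + t • (x₁ - x₀)) with hg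
  have hgc : Continuous g :=
    hφc.comp (continuous_const.add (continuous_id.smul continuous_const))
  have hg0 : g 0 = φ x₀ := by simp [hg]
  have hg1 : g 1 = φ x₁ := by simp [hg]
  have := intermediate_value_uIcc (a := (0:ℝ)) (b := 1) (f := g) hgc.continuousOn
  rw [hg0, hg1] at this
  obtain ⟨t, ht, hgt⟩ := this h0
  rw [Set.uIcc_of_le zero_le_one] at ht
  refine ⟨x₀ + t • (x₁ - x₀), ?_, hgt⟩
  calc ‖x₀ + t • (x₁ - x₀) - x₀‖ = ‖t • (x₁ - x₀)‖ := by rw [add_sub_cancel_left]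
  _ = |t| * ‖x₁ - x₀‖ := by rw [norm_smul, Real.norm_eq_abs]
  _ ≤ 1 * r := by
      apply mul_le_mul _ h1 (norm_nonneg _) zero_le_one
      rw [abs_of_nonneg ht.1]; exact ht.2
  _ = r := one_mul r

/-- **Quantitative level-set perturbation estimate.** Let `φ : ℝ³ → ℝ` be continuously
differentiable, `c₀ > 0`, `ε > 0`, and `x₀` with `|φ(x₀)| ≤ ε` and `‖∇φ(y)‖ ≥ c₀` for
all `y` in the closed ball of radius `2 ε / c₀` around `x₀`. Then there is `z` with
`‖z − x₀‖ ≤ 2 ε / c₀` and `φ(z) = 0`; in particular the distance from `x₀` to the zero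
level set of `φ` is at most `2 ε / c₀`. -/
theorem level_set_perturbation
    (φ : EuclideanSpace ℝ (Fin 3) → ℝ)
    (hφ : ContDiff ℝ 1 φ)
    (c₀ : ℝ) (hc₀ : 0 < c₀)
    (ε : ℝ) (hε : 0 < ε)
    (x₀ : EuclideanSpace ℝ (Fin 3))
    (hx₀ : |φ x₀| ≤ ε)
    (hgrad : ∀ y ∈ Metric.closedBall x₀ (2 * ε / c₀), c₀ ≤ ‖gradient φ y‖) :
    (∃ z : EuclideanSpace ℝ (Fin 3), ‖z - x₀‖ ≤ 2 * ε / c₀ ∧ φ z = 0) ∧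
      Metric.infDist x₀ (φ ⁻¹' {0}) ≤ 2 * ε / c₀ := by
  set r : ℝ := 2 * ε / c₀ with hrdef
  have hr : 0 < r := by positivity
  have habs := abs_le.mp hx₀
  have hkey : c₀ / 2 * r = ε := by rw [hrdef]; field_simp
  have hmain : ∃ z : E, ‖z - x₀‖ ≤ r ∧ φ z = 0 := by
    rcases le_or_gt 0 (φ x₀) with hsign | hsign
    · obtain ⟨x₁, hx₁, hφ₁⟩ := descent φ hφ c₀ r hc₀ hr x₀ hgrad
      have hφ₁' : φ x₁ ≤ 0 := by rw [hkey] at hφ₁; linarith [habs.2]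
      exact seg_zero φ hφ.continuous x₀ x₁ r (le_of_lt hr) hx₁
        (Set.mem_uIcc.mpr (Or.inr ⟨hφ₁', hsign⟩))
    · have hgradneg : ∀ y ∈ Metric.closedBall x₀ r, c₀ ≤ ‖gradient (fun x => -φ x) y‖ := by
        intro y hy
        have : gradient (fun x => -φ x) y = -(gradient φ y) := by
          rw [gradient, gradient, fderiv_fun_neg, map_neg]
        rw [this, norm_neg]
        exact hgrad y hy
      obtain ⟨x₁, hx₁, hφ₁⟩ := descent (fun x => -φ x) (hφ.neg) c₀ r hc₀ hr x₀ hgradneg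
      have hφ₁' : 0 ≤ φ x₁ := by
        rw [hkey] at hφ₁
        linarith [habs.1]
      exact seg_zero φ hφ.continuous x₀ x₁ r (le_of_lt hr) hx₁
        (Set.mem_uIcc.mpr (Or.inl ⟨le_of_lt hsign, hφ₁'⟩))
  obtain ⟨z, hz1, hz2⟩ := hmain
  refine ⟨⟨z, hz1, hz2⟩, ?_⟩
  calc Metric.infDist x₀ (φ ⁻¹' {0}) ≤ dist x₀ z :=
    Metric.infDist_le_dist_of_mem (by simp [hz2])
  _ = ‖z - x₀‖ := by rw [dist_eq_norm, norm_sub_rev]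
  _ ≤ r := hz1
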